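/- arXiv:1702.06596 — 4 statements merged into one kernel-verified Lean document; each statement's English description precedes it below -/
import Mathlib

section
/- Let C1 and C2 be categories in which all hom-sets are finite. If both C1 and C2 have the Ramsey property, then the product category C1 × C2 has the Ramsey property. -/
open CategoryTheory

universe v₁ v₂ u₁ u₂

/-- A category has the Ramsey property if for every `k ≥ 2` and objects `A`, `B` there is
an object `Z` such that every `k`-coloring of `hom(A, Z)` admits `w ∈ hom(B, Z)` with
`w · hom(A, B)` monochromatic. -/
def RamseyProperty (C : Type u₁) [Category.{v₁} C] : Prop :=
  ∀ (k : ℕ), 2 ≤ k → ∀ (A B : C), ∃ Z : C,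
    ∀ χ : (A ⟶ Z) → Fin k, ∃ (w : B ⟶ Z) (i : Fin k),
      ∀ u : A ⟶ B, χ (u ≫ w) = i

/-- If `C₁` and `C₂` have finite hom-sets and both have the Ramsey property, then the
product category `C₁ × C₂` has the Ramsey property. -/
theorem ramseyProperty_prod {C₁ : Type u₁} {C₂ : Type u₂}
    [Category.{v₁} C₁] [Category.{v₂} C₂]
    (hfin₁ : ∀ A B : C₁, Finite (A ⟶ B)) (hfin₂ : ∀ A B : C₂, Finite (A ⟶ B))
    (h₁ : RamseyProperty C₁) (h₂ : RamseyProperty C₂) :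
    RamseyProperty (C₁ × C₂) := by
  intro k hk A B
  obtain ⟨Z₁, hZ₁⟩ := h₁ k hk A.1 B.1
  haveI : Finite (A.1 ⟶ Z₁) := hfin₁ A.1 Z₁
  haveI : Fintype ((A.1 ⟶ Z₁) → Fin k) := Fintype.ofFinite _
  set m := Fintype.card ((A.1 ⟶ Z₁) → Fin k) with hm
  obtain ⟨Z₂, hZ₂⟩ := h₂ (max m 2) (le_max_right _ _) A.2 B.2
  refine ⟨(Z₁, Z₂), ?_⟩
  intro χ
  let e : ((A.1 ⟶ Z₁) → Fin k) ≃ Fin m := Fintype.equivFin _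
  let E : ((A.1 ⟶ Z₁) → Fin k) → Fin (max m 2) :=
    fun g => Fin.castLE (le_max_left m 2) (e g)
  have hEinj : Function.Injective E :=
    (Fin.castLE_injective _).comp e.injective
  obtain ⟨w₂, j, hw₂⟩ := hZ₂ (fun f₂ => E (fun f₁ => χ (f₁, f₂)))
  by_cases h : Nonempty (A.2 ⟶ B.2)
  · obtain ⟨u₀⟩ := h
    obtain ⟨w₁, i, hw₁⟩ := hZ₁ (fun f₁ => χ (f₁, u₀ ≫ w₂))
    refine ⟨(w₁, w₂), i, ?_⟩
    rintro ⟨u₁, u₂⟩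
    have h2 : E (fun f₁ => χ (f₁, u₂ ≫ w₂)) = E (fun f₁ => χ (f₁, u₀ ≫ w₂)) := by
      rw [hw₂ u₂, hw₂ u₀]
    have h3 := congrFun (hEinj h2) (u₁ ≫ w₁)
    calc χ ((u₁, u₂) ≫ (w₁, w₂)) = χ (u₁ ≫ w₁, u₂ ≫ w₂) := rfl
      _ = χ (u₁ ≫ w₁, u₀ ≫ w₂) := h3
      _ = i := hw₁ u₁
  · obtain ⟨w₁, i, _⟩ := hZ₁ (fun _ => ⟨0, by omega⟩)
    refine ⟨(w₁, w₂), i, ?_⟩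
    rintro ⟨u₁, u₂⟩
    exact absurd ⟨u₂⟩ h
end

section
/- Let C1 and C2 be categories in which all hom-sets are finite. If both C1 and C2 have the dual Ramsey property, then C1 × C2 has the dual Ramsey property. -/
open CategoryTheory

universe v₁ v₂ u₁ u₂

/-- A category has the dual Ramsey property if its opposite has the Ramsey property. -/
def DualRamseyProperty (C : Type u₁) [Category.{v₁} C] : Prop :=
  RamseyProperty Cᵒᵖ


lemma ramseyProperty_of_equivalence {D : Type*} {E : Type*} [Category D] [Category E]
    (e : D ≌ E) (h : RamseyProperty D) : RamseyProperty E := by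
  intro k hk A B
  obtain ⟨Z', hZ'⟩ := h k hk (e.inverse.obj A) (e.inverse.obj B)
  refine ⟨e.functor.obj Z', fun χ => ?_⟩
  set adj := e.symm.toAdjunction
  obtain ⟨w', i, hw'⟩ := hZ' (fun f => χ ((adj.homEquiv A Z') f))
  refine ⟨(adj.homEquiv B Z') w', i, fun u => ?_⟩
  have h2 := hw' (e.symm.functor.map u)
  rwa [Adjunction.homEquiv_naturality_left] at h2

lemma ramseyProperty_prod_s8 {D₁ : Type*} {D₂ : Type*} [Category D₁] [Category D₂]
    (hf₂ : ∀ A B : D₂, Finite (A ⟶ B))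
    (h₁ : RamseyProperty D₁) (h₂ : RamseyProperty D₂) :
    RamseyProperty (D₁ × D₂) := by
  intro k hk A B
  obtain ⟨A₁, A₂⟩ := A
  obtain ⟨B₁, B₂⟩ := B
  obtain ⟨Z₂, hZ₂⟩ := h₂ k hk A₂ B₂
  haveI : Finite (A₂ ⟶ Z₂) := hf₂ _ _
  haveI : Fintype ((A₂ ⟶ Z₂) → Fin k) := Fintype.ofFinite _
  set m := Fintype.card ((A₂ ⟶ Z₂) → Fin k) with hm
  let enc : ((A₂ ⟶ Z₂) → Fin k) ↪ Fin (m + 2) :=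
    (Fintype.equivFin _).toEmbedding.trans (Fin.castLEEmb (Nat.le_add_right _ 2))
  obtain ⟨Z₁, hZ₁⟩ := h₁ (m + 2) (by omega) A₁ B₁
  refine ⟨(Z₁, Z₂), fun χ => ?_⟩
  obtain ⟨w₁, i', hw₁⟩ := hZ₁ (fun f => enc (fun g => χ (f, g)))
  by_cases hne : Nonempty (A₁ ⟶ B₁)
  · obtain ⟨u₀⟩ := hne
    obtain ⟨w₂, i, hw₂⟩ := hZ₂ (fun g => χ (u₀ ≫ w₁, g))
    refine ⟨(w₁, w₂), i, ?_⟩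
    rintro ⟨u₁, u₂⟩
    have h1 : (fun g => χ (u₁ ≫ w₁, g)) = (fun g => χ (u₀ ≫ w₁, g)) :=
      enc.injective (by rw [hw₁ u₁, hw₁ u₀])
    have h3 : χ ((u₁, u₂) ≫ (w₁, w₂)) = χ (u₁ ≫ w₁, u₂ ≫ w₂) := rfl
    rw [h3]
    have := congrFun h1 (u₂ ≫ w₂)
    simp only at this
    rw [this]
    exact hw₂ u₂
  · obtain ⟨w₂, i, -⟩ := hZ₂ (fun _ => ⟨0, by omega⟩)
    exact ⟨(w₁, w₂), i, fun u => absurd ⟨u.1⟩ hne⟩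

/-- If `C₁` and `C₂` have finite hom-sets and both have the dual Ramsey property, then the
product category `C₁ × C₂` has the dual Ramsey property. -/
theorem dualRamseyProperty_prod {C₁ : Type u₁} {C₂ : Type u₂}
    [Category.{v₁} C₁] [Category.{v₂} C₂]
    (hfin₁ : ∀ A B : C₁, Finite (A ⟶ B)) (hfin₂ : ∀ A B : C₂, Finite (A ⟶ B))
    (h₁ : DualRamseyProperty C₁) (h₂ : DualRamseyProperty C₂) :
    DualRamseyProperty (C₁ × C₂) := by
  have hf₂ : ∀ A B : C₂ᵒᵖ, Finite (A ⟶ B) := fun A B => Finite.of_equiv _ (opEquiv A B).symm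
  have h : RamseyProperty (C₁ᵒᵖ × C₂ᵒᵖ) := ramseyProperty_prod_s8 hf₂ h₁ h₂
  exact ramseyProperty_of_equivalence (prodOpEquiv (C := C₁) (D := C₂)).symm h
end

section
/- The Finite Ramsey Theorem: for all positive integers k, a, m there is a positive integer n such that for every n-element set C and every k-coloring of the set of all a-element subsets of C, there is an m-element subset B of C such that all a-element subsets of B receive the same color. -/
open Set

/-- Infinite Ramsey theorem on ℕ. -/
theorem inf_ramsey (a : ℕ) : ∀ (k : ℕ) (χ : Finset ℕ → Fin k) (S : Set ℕ), S.Infinite →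
    ∃ T ⊆ S, T.Infinite ∧ ∃ i : Fin k,
      ∀ s : Finset ℕ, ↑s ⊆ T → s.card = a → χ s = i := by
  induction a with
  | zero =>
    intro k χ S hS
    exact ⟨S, le_refl _, hS, χ ∅, fun s _ hs => by rw [Finset.card_eq_zero.mp hs]⟩
  | succ a IH =>
    intro k χ S hS
    have key : ∀ S : {S : Set ℕ // S.Infinite}, ∃ p : ℕ × {T : Set ℕ // T.Infinite} × Fin k,
        p.1 ∈ S.1 ∧ p.2.1.1 ⊆ S.1 ∩ Set.Ioi p.1 ∧
        ∀ s : Finset ℕ, ↑s ⊆ p.2.1.1 → s.card = a → χ (insert p.1 s) = p.2.2 := by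
      rintro ⟨S, hS⟩
      obtain ⟨x, hx⟩ := hS.nonempty
      have h2 : (S ∩ Set.Ioi x).Infinite := by
        have : S \ Set.Iic x = S ∩ Set.Ioi x := by
          ext y; simp [Set.mem_diff, not_le]
        rw [← this]
        exact hS.diff (Set.finite_Iic x)
      obtain ⟨T, hTsub, hTinf, i, hi⟩ := IH k (fun s => χ (insert x s)) _ h2
      exact ⟨⟨x, ⟨T, hTinf⟩, i⟩, hx, hTsub, hi⟩
    choose F hmem hsub hmono using key
    set g : ℕ → {S : Set ℕ // S.Infinite} :=
      fun n => Nat.rec ⟨S, hS⟩ (fun _ p => (F p).2.1) n with hg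
    set x : ℕ → ℕ := fun n => (F (g n)).1 with hxdef
    set c : ℕ → Fin k := fun n => (F (g n)).2.2 with hcdef
    have hx : ∀ n, x n ∈ (g n).1 := fun n => hmem (g n)
    have hsub' : ∀ n, (g (n + 1)).1 ⊆ (g n).1 ∩ Set.Ioi (x n) := fun n => hsub (g n)
    have hchain : ∀ m n, m ≤ n → (g n).1 ⊆ (g m).1 := by
      intro m n h
      induction n with
      | zero => simp_all
      | succ n ih =>
        rcases Nat.lt_or_ge m (n+1) with h' | h'
        · exact ((hsub' n).trans Set.inter_subset_left).trans (ih (Nat.lt_succ_iff.mp h'))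
        · have : m = n + 1 := le_antisymm h h'
          subst this; exact subset_rfl
    have hxmono : StrictMono x := by
      apply strictMono_nat_of_lt_succ
      intro n
      exact ((hchain (n+1) (n+1) le_rfl).trans (fun y hy => ((hsub' n) hy).2)) (hx (n+1))
    have hxS : ∀ n, x n ∈ S := fun n => hchain 0 n (Nat.zero_le n) (hx n)
    obtain ⟨i, hi⟩ := Finite.exists_infinite_fiber c
    set I : Set ℕ := c ⁻¹' {i} with hI
    refine ⟨x '' I, ?_, ((Set.infinite_coe_iff.mp hi).image (hxmono.injective.injOn)), i, ?_⟩
    · rintro _ ⟨n, _, rfl⟩; exact hxS n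
    · intro s hsT hscard
      have hsne : s.Nonempty := Finset.card_pos.mp (by omega)
      set y := s.min' hsne with hy
      have hys : y ∈ s := s.min'_mem hsne
      obtain ⟨n, hnI, hny⟩ := hsT hys
      have herase : ↑(s.erase y) ⊆ (g (n+1)).1 := by
        intro z hz
        have hz' := Finset.mem_of_mem_erase hz
        obtain ⟨m, hmI, hmz⟩ := hsT hz'
        have hzy : y < z := lt_of_le_of_ne (s.min'_le z hz') (Ne.symm (Finset.ne_of_mem_erase hz))
        have hmn : n < m := by
          rw [← hny, ← hmz] at hzy
          exact hxmono.lt_iff_lt.mp hzy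
        rw [← hmz]
        exact hchain (n+1) m hmn (hx m)
      have hcard : (s.erase y).card = a := by
        rw [Finset.card_erase_of_mem hys, hscard]; omega
      have h2 : χ (insert (x n) (s.erase y)) = c n := hmono (g n) (s.erase y) herase hcard
      rw [hny, Finset.insert_erase hys] at h2
      rw [h2]
      exact hnI

/-- The Finite Ramsey Theorem: for all positive integers `k`, `a`, `m` there is `n` such
that for every `n`-element set `C` and every `k`-coloring of the `a`-element subsets of
`C` there is an `m`-element subset `B` of `C` all of whose `a`-element subsets get the
same color. -/
theorem finite_ramsey (k a m : ℕ) (hk : 1 ≤ k) (ha : 1 ≤ a) (hm : 1 ≤ m) :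
    ∃ n : ℕ, 1 ≤ n ∧ ∀ (C : Type) [Fintype C] [DecidableEq C], Fintype.card C = n →
      ∀ χ : {s : Finset C // s.card = a} → Fin k,
        ∃ B : Finset C, B.card = m ∧ ∃ i : Fin k,
          ∀ s : {s : Finset C // s.card = a}, s.1 ⊆ B → χ s = i := by
  classical
  by_contra hcon
  -- For every `n ≥ 1` there is a bad coloring of `Fin n`; extend to all `n`.
  have hbad : ∀ n : ℕ, ∃ χ' : {s : Finset (Fin n) // s.card = a} → Fin k,
      ∀ B : Finset (Fin n), B.card = m → ∀ i : Fin k,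
        ∃ s : {s : Finset (Fin n) // s.card = a}, s.1 ⊆ B ∧ χ' s ≠ i := by
    intro n
    rcases Nat.eq_zero_or_pos n with rfl | hn
    · refine ⟨fun _ => ⟨0, hk⟩, fun B hB i => ?_⟩
      have h0 : B.card = 0 := Nat.le_zero.mp (by simpa using B.card_le_univ)
      omega
    · -- If every coloring of `Fin n` had a monochromatic set, `n` would work for every `C`.
      by_contra hgood
      push_neg at hgood
      have hall : ∀ (C : Type) [Fintype C] [DecidableEq C], Fintype.card C = n →
          ∀ χ : {s : Finset C // s.card = a} → Fin k,
            ∃ B : Finset C, B.card = m ∧ ∃ i : Fin k,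
              ∀ s : {s : Finset C // s.card = a}, s.1 ⊆ B → χ s = i := by
        intro C _ _ hC χ
        set e : C ≃ Fin n := Fintype.equivFinOfCardEq hC with he
        have hback : ∀ t : Finset (Fin n), (t.map e.symm.toEmbedding).map e.toEmbedding = t := by
          intro t; ext z; simp
        have hforth : ∀ t : Finset C, (t.map e.toEmbedding).map e.symm.toEmbedding = t := by
          intro t; ext z; simp
        obtain ⟨B', hB'card, i, hB'⟩ := hgood
          (fun s => χ ⟨s.1.map e.symm.toEmbedding, by rw [Finset.card_map]; exact s.2⟩)
        refine ⟨B'.map e.symm.toEmbedding, by rw [Finset.card_map]; exact hB'card, i, ?_⟩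
        intro s hs
        have hs' : s.1.map e.toEmbedding ⊆ B' := by
          have := Finset.map_subset_map (f := e.toEmbedding) |>.mpr hs
          rwa [hback B'] at this
        have := hB' ⟨s.1.map e.toEmbedding, by rw [Finset.card_map]; exact s.2⟩ hs'
        simpa [hforth s.1] using this
      exact hcon ⟨n, hn, hall⟩
  choose ψ' hψ' using hbad
  -- Project the colorings to colorings of finite sets of naturals.
  set ψ : ℕ → Finset ℕ → Fin k := fun n s =>
    if h : (∀ z ∈ s, z < n) ∧ s.card = a then
      ψ' n ⟨s.attachFin h.1, by rw [Finset.card_attachFin]; exact h.2⟩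
    else ⟨0, hk⟩ with hψdef
  -- Take an ultrafilter extending `atTop` and the limit coloring.
  set U : Ultrafilter ℕ := Ultrafilter.of Filter.atTop with hU
  have hUatTop : (U : Filter ℕ) ≤ Filter.atTop := Ultrafilter.of_le _
  have hlim : ∀ s : Finset ℕ, ∃ i : Fin k, {n | ψ n s = i} ∈ U := by
    intro s
    have hcover : (⋃ i ∈ (Set.univ : Set (Fin k)), {n | ψ n s = i}) ∈ U := by
      have : (⋃ i ∈ (Set.univ : Set (Fin k)), {n | ψ n s = i}) = Set.univ := by
        ext n; simp
      rw [this]; exact Filter.univ_mem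
    rw [Ultrafilter.finite_biUnion_mem_iff Set.finite_univ] at hcover
    obtain ⟨i, _, hi⟩ := hcover
    exact ⟨i, hi⟩
  choose χ hχ using hlim
  -- Apply the infinite Ramsey theorem.
  obtain ⟨T, -, hTinf, i, hT⟩ := inf_ramsey a k χ Set.univ Set.infinite_univ
  obtain ⟨B₀, hB₀T, hB₀card⟩ := hTinf.exists_subset_card_eq m
  set N : ℕ := B₀.sup id + 1 with hN
  have hB₀lt : ∀ z ∈ B₀, z < N := by
    intro z hz
    have : z ≤ B₀.sup id := Finset.le_sup (f := id) hz
    omega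
  -- The set of `n` where everything agrees is in the ultrafilter, hence nonempty.
  have hE : ({n | N ≤ n} ∩ ⋂ s ∈ B₀.powersetCard a, {n | ψ n s = χ s}) ∈ U := by
    refine Filter.inter_mem (hUatTop (Filter.mem_atTop N)) ?_
    rw [Filter.biInter_finset_mem]
    intro s _
    exact hχ s
  obtain ⟨n, hnN, hnAgr⟩ := U.nonempty_of_mem hE
  simp only [Set.mem_iInter] at hnAgr
  have hnN' : (N : ℕ) ≤ n := hnN
  have hlt : ∀ z ∈ B₀, z < n := fun z hz => lt_of_lt_of_le (hB₀lt z hz) hnN'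
  -- `B₀` gives a monochromatic `m`-set for the bad coloring `ψ' n`; contradiction.
  obtain ⟨s', hs'B, hs'ne⟩ := hψ' n (B₀.attachFin hlt)
    (by rw [Finset.card_attachFin]; exact hB₀card) i
  apply hs'ne
  set s : Finset ℕ := s'.1.map Fin.valEmbedding with hs
  have hsB₀ : s ⊆ B₀ := by
    intro z hz
    rw [hs, Finset.mem_map] at hz
    obtain ⟨w, hw, rfl⟩ := hz
    have := hs'B hw
    rwa [Finset.mem_attachFin] at this
  have hscard : s.card = a := by rw [hs, Finset.card_map]; exact s'.2
  have hslt : ∀ z ∈ s, z < n := fun z hz => hlt z (hsB₀ hz)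
  have hattach : s.attachFin hslt = s'.1 := by
    ext w
    rw [Finset.mem_attachFin, hs, Finset.mem_map]
    constructor
    · rintro ⟨u, hu, huw⟩
      have : u = w := Fin.val_injective huw
      rwa [← this]
    · intro hw; exact ⟨w, hw, rfl⟩
  have hψval : ψ n s = ψ' n s' := by
    rw [hψdef]
    simp only
    rw [dif_pos ⟨hslt, hscard⟩]
    congr 1
    exact Subtype.ext (by simpa using hattach)
  have hmem : s ∈ B₀.powersetCard a := Finset.mem_powersetCard.mpr ⟨hsB₀, hscard⟩
  have hagr : ψ n s = χ s := hnAgr s hmem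
  have hmono : χ s = i := hT s (fun z hz => hB₀T (hsB₀ hz)) hscard
  rw [← hψval, hagr, hmono]
end

section
/- The subcategory D of Ch_rs^op × Ch_rs^op consisting of pairs of linear orders on a common finite set, with morphisms given by pairs (f,f) of a common underlying map that is rigid for both orders, is closed for binary diagrams: every binary diagram in D that has a commuting cocone in Ch_rs^op × Ch_rs^op has a commuting cocone in D. (The cocone object is constructed via concatenation of the two chains of the ambient cocone object, with the two orders concatenated in opposite ways.) -/
/-- `f` is a rigid surjection from the chain `(A, lA)` onto the chain `(B, lB)`. -/
def IsRigidSurjectionWrt {A B : Type*} (lA : LinearOrder A) (lB : LinearOrder B)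
    (f : A → B) : Prop :=
  Function.Surjective f ∧
    ∀ (b b' : B) (m m' : A), lB.lt b b' →
      (f m = b ∧ ∀ x, f x = b → lA.le m x) →
      (f m' = b' ∧ ∀ x, f x = b' → lA.le m' x) →
      lA.lt m m'

/-- An object of the subcategory `D` of `Ch_rs^op × Ch_rs^op` (equivalently, a finite
permutation): a finite set equipped with two linear orders. -/
structure PermObj where
  carrier : Type
  [fin : Fintype carrier]
  ord1 : LinearOrder carrier
  ord2 : LinearOrder carrier

/-- A quotient map for permutations: a surjection rigid with respect to both orders. -/
def IsQuotientMap (A B : PermObj) (f : A.carrier → B.carrier) : Prop :=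
  IsRigidSurjectionWrt A.ord1 B.ord1 f ∧ IsRigidSurjectionWrt A.ord2 B.ord2 f

section Aux

open Sum

/-- Concatenation of two linear orders, `C` first. -/
def catLO {C D : Type} (lC : LinearOrder C) (lD : LinearOrder D) : LinearOrder (C ⊕ D) :=
  letI := lC; letI := lD
  LinearOrder.lift' (toLex : C ⊕ D → C ⊕ₗ D) toLex.injective

/-- Pullback of a linear order along an equivalence. -/
def pbLO {X Y : Type} (lY : LinearOrder Y) (e : X ≃ Y) : LinearOrder X :=
  letI := lY
  LinearOrder.lift' (e : X → Y) e.injective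

lemma rigid_pb {X Y B : Type} (lY : LinearOrder Y) (lB : LinearOrder B) (e : X ≃ Y)
    (h : Y → B) (hh : IsRigidSurjectionWrt lY lB h) :
    IsRigidSurjectionWrt (pbLO lY e) lB (h ∘ e) := by
  obtain ⟨hs, hr⟩ := hh
  refine ⟨hs.comp e.surjective, ?_⟩
  rintro b b' x x' hbb' ⟨hx, hminx⟩ ⟨hx', hminx'⟩
  have h1 : h (e x) = b ∧ ∀ y, h y = b → lY.le (e x) y := by
    refine ⟨hx, fun y hy => ?_⟩
    have h3 : lY.le (e x) (e (e.symm y)) := hminx (e.symm y) (by simpa [Function.comp] using hy)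
    simpa using h3
  have h2 : h (e x') = b' ∧ ∀ y, h y = b' → lY.le (e x') y := by
    refine ⟨hx', fun y hy => ?_⟩
    have h3 : lY.le (e x') (e (e.symm y)) := hminx' (e.symm y) (by simpa [Function.comp] using hy)
    simpa using h3
  exact hr b b' (e x) (e x') hbb' h1 h2

lemma rigid_cat {C D B : Type} (lC : LinearOrder C) (lD : LinearOrder D) (lB : LinearOrder B)
    (f : C → B) (g : D → B) (hf : IsRigidSurjectionWrt lC lB f) :
    IsRigidSurjectionWrt (catLO lC lD) lB (Sum.elim f g) := by
  letI := lC; letI := lD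
  obtain ⟨hs, hr⟩ := hf
  constructor
  · intro b
    obtain ⟨c, hc⟩ := hs b
    exact ⟨Sum.inl c, hc⟩
  · rintro b b' x x' hbb' ⟨hx, hminx⟩ ⟨hx', hminx'⟩
    -- the minimum of a fiber lies in the `C` part
    have key : ∀ (b₀ : B) (z : C ⊕ D), Sum.elim f g z = b₀ →
        (∀ w, Sum.elim f g w = b₀ → (catLO lC lD).le z w) →
        ∃ c : C, z = Sum.inl c ∧ f c = b₀ ∧ ∀ y, f y = b₀ → c ≤ y := by
      intro b₀ z hz hmin
      obtain ⟨c₀, hc₀⟩ := hs b₀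
      have hle : (catLO lC lD).le z (Sum.inl c₀) := hmin (Sum.inl c₀) hc₀
      cases z with
      | inl c =>
        refine ⟨c, rfl, hz, fun y hy => ?_⟩
        have := hmin (Sum.inl y) hy
        have h2 : (toLex (Sum.inl c) : C ⊕ₗ D) ≤ toLex (Sum.inl y) := this
        exact Sum.Lex.inl_le_inl_iff.mp h2
      | inr d =>
        exfalso
        have h2 : (toLex (Sum.inr d) : C ⊕ₗ D) ≤ toLex (Sum.inl c₀) := hle
        exact Sum.Lex.not_inr_le_inl h2
    obtain ⟨c, rfl, hc, hcmin⟩ := key b x hx hminx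
    obtain ⟨c', rfl, hc', hcmin'⟩ := key b' x' hx' hminx'
    have hlt : lC.lt c c' := hr b b' c c' hbb' ⟨hc, hcmin⟩ ⟨hc', hcmin'⟩
    show (toLex (Sum.inl c) : C ⊕ₗ D) < toLex (Sum.inl c')
    exact Sum.Lex.inl_lt_inl_iff.mpr hlt

end Aux

/-- The subcategory `D` of `Ch_rs^op × Ch_rs^op` is closed for binary diagrams: every
binary diagram in `D` (bottom vertices sent to the permutation `A`, top vertices to the
permutation `B`, with arrows given by quotient maps) which has a commuting cocone in
`Ch_rs^op × Ch_rs^op` — i.e. a pair of chains `(Cc, <^C)`, `(Dc, ⊑^D)` with pairs of rigid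
surjections `(fᵢ, gᵢ)` onto the two chains of `B` making everything commute — has a
commuting cocone in `D`, i.e. a permutation `Z` with quotient maps `Z → B`. -/
theorem D_closedForBinaryDiagrams (A B : PermObj) (n m : ℕ)
    (t : Fin m → Fin n × Fin n ×
      {u : B.carrier → A.carrier // IsQuotientMap B A u} ×
      {u : B.carrier → A.carrier // IsQuotientMap B A u})
    (hcocone : ∃ (Cc Dc : Type) (_ : Fintype Cc) (_ : Fintype Dc)
      (lC : LinearOrder Cc) (lD : LinearOrder Dc)
      (f : Fin n → Cc → B.carrier) (g : Fin n → Dc → B.carrier),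
      (∀ i, IsRigidSurjectionWrt lC B.ord1 (f i)) ∧
      (∀ i, IsRigidSurjectionWrt lD B.ord2 (g i)) ∧
      ∀ p : Fin m,
        (t p).2.2.1.1 ∘ f (t p).1 = (t p).2.2.2.1 ∘ f (t p).2.1 ∧
        (t p).2.2.1.1 ∘ g (t p).1 = (t p).2.2.2.1 ∘ g (t p).2.1) :
    ∃ (Z : PermObj) (e : Fin n → {φ : Z.carrier → B.carrier // IsQuotientMap Z B φ}),
      ∀ p : Fin m,
        (t p).2.2.1.1 ∘ (e (t p).1).1 = (t p).2.2.2.1 ∘ (e (t p).2.1).1 := by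
  obtain ⟨Cc, Dc, fC, fD, lC, lD, f, g, hf, hg, hcomm⟩ := hcocone
  letI : Fintype Cc := fC
  letI : Fintype Dc := fD
  -- cocone object: concatenation `Cc ⊕ Dc` with the two orders concatenated oppositely
  refine ⟨⟨Cc ⊕ Dc, catLO lC lD, pbLO (catLO lD lC) (Equiv.sumComm Cc Dc)⟩,
    fun i => ⟨Sum.elim (f i) (g i), ?_, ?_⟩, ?_⟩
  · exact rigid_cat lC lD B.ord1 (f i) (g i) (hf i)
  · have h2 := rigid_pb (catLO lD lC) B.ord2 (Equiv.sumComm Cc Dc)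
      (Sum.elim (g i) (f i)) (rigid_cat lD lC B.ord2 (g i) (f i) (hg i))
    have heq : (Sum.elim (g i) (f i)) ∘ (Equiv.sumComm Cc Dc) = Sum.elim (f i) (g i) := by
      funext z; cases z <;> rfl
    rwa [heq] at h2
  · intro p
    funext z
    cases z with
    | inl c => exact congrFun (hcomm p).1 c
    | inr d => exact congrFun (hcomm p).2 d
end
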